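/- For every integer p ≥ 2 and every natural number q ≥ 1, det A(p,q) > 0, and moreover |det A(p,q)| = |b(p, q−1, q−1)| + |c(p, q−1, q−1)|. -/
import Mathlib


/-- Entry function for the matrix `A(p,q)` from the paper. -/
def Aent (p : ℤ) (q : ℕ) (i j : ℕ) : ℤ :=
  if i = j ∧ i ≤ 2 then 1 - 2 * p
  else if i ≤ 2 ∧ j ≤ 2 then p
  else if 3 ≤ i ∧ i = j then 2
  else if 3 ≤ min i j ∧ max i j ≤ q + 1 ∧ max i j = min i j + 1 then -1
  else if q + 2 ≤ min i j ∧ max i j ≤ 2 * q ∧ max i j = min i j + 1 then -1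
  else if 2 ≤ q ∧ ((i = 1 ∧ j = 3) ∨ (i = 3 ∧ j = 1)) then -1
  else if 2 ≤ q ∧ ((i = 2 ∧ j = q + 2) ∨ (i = q + 2 ∧ j = 2)) then -1
  else 0

/-- The matrix `A(p,q)`: a symmetric `(2q+1) × (2q+1)` integer matrix. -/
def Amat (p : ℤ) (q : ℕ) : Matrix (Fin (2 * q + 1)) (Fin (2 * q + 1)) ℤ :=
  fun i j => Aent p q i.val j.val

/-- Entry function for the matrix `B(p,q,r)` from the paper. -/
def Bent (p : ℤ) (q r : ℕ) (i j : ℕ) : ℤ :=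
  if i = 0 ∧ j = 0 then -2 * p
  else if i = j ∧ (i = 1 ∨ i = 2) then 1 - 2 * p
  else if i ≤ 2 ∧ j ≤ 2 then p
  else if 3 ≤ i ∧ i = j then 2
  else if 3 ≤ min i j ∧ max i j ≤ 2 + q ∧ max i j = min i j + 1 then -1
  else if 3 + q ≤ min i j ∧ max i j ≤ 2 + q + r ∧ max i j = min i j + 1 then -1
  else if 1 ≤ q ∧ ((i = 2 ∧ j = 3) ∨ (i = 3 ∧ j = 2)) then -1
  else if 1 ≤ r ∧ ((i = 1 ∧ j = 3 + q) ∨ (i = 3 + q ∧ j = 1)) then -1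
  else 0

/-- The matrix `B(p,q,r)`: a symmetric `(3+q+r) × (3+q+r)` integer matrix. -/
def Bmat (p : ℤ) (q r : ℕ) : Matrix (Fin (3 + q + r)) (Fin (3 + q + r)) ℤ :=
  fun i j => Bent p q r i.val j.val

/-- `b(p,q,r) = det B(p,q,r)`. -/
def bdet (p : ℤ) (q r : ℕ) : ℤ := (Bmat p q r).det

/-- Entry function for the matrix `C(p,q,r)` from the paper. -/
def Cent (p : ℤ) (q r : ℕ) (i j : ℕ) : ℤ :=
  if i = j ∧ i ≤ 1 then 1 - 2 * p
  else if i ≤ 1 ∧ j ≤ 1 then p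
  else if 2 ≤ i ∧ i = j then 2
  else if 2 ≤ min i j ∧ max i j ≤ 1 + q ∧ max i j = min i j + 1 then -1
  else if 2 + q ≤ min i j ∧ max i j ≤ 1 + q + r ∧ max i j = min i j + 1 then -1
  else if 1 ≤ q ∧ ((i = 1 ∧ j = 2) ∨ (i = 2 ∧ j = 1)) then -1
  else if 1 ≤ r ∧ ((i = 0 ∧ j = 2 + q) ∨ (i = 2 + q ∧ j = 0)) then -1
  else 0

/-- The matrix `C(p,q,r)`: a symmetric `(2+q+r) × (2+q+r)` integer matrix. -/
def Cmat (p : ℤ) (q r : ℕ) : Matrix (Fin (2 + q + r)) (Fin (2 + q + r)) ℤ :=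
  fun i j => Cent p q r i.val j.val

/-- `c(p,q,r) = det C(p,q,r)`. -/
def cdet (p : ℤ) (q r : ℕ) : ℤ := (Cmat p q r).det


-- ===================== auxiliary machinery =====================

def corem (f : ℕ → ℕ → ℤ) (n : ℕ) : Matrix (Fin n) (Fin n) ℤ := fun i j => f i.val j.val

def chEnt (f : ℕ → ℕ → ℤ) (m u : ℕ) : ℕ → ℕ → ℤ := fun i j =>
  if i < m ∧ j < m then f i j
  else if m ≤ i ∧ i = j then 2
  else if (m ≤ i ∧ j = i + 1) ∨ (m ≤ j ∧ i = j + 1) then -1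
  else if (i = u ∧ j = m) ∨ (i = m ∧ j = u) then -1
  else 0

def delEnt (f : ℕ → ℕ → ℤ) (v : ℕ) : ℕ → ℕ → ℤ := fun i j =>
  f (if i < v then i else i + 1) (if j < v then j else j + 1)

lemma succAbove_val {n : ℕ} (p : Fin (n+1)) (i : Fin n) :
    (p.succAbove i).val = if i.val < p.val then i.val else i.val + 1 := by
  rw [Fin.succAbove]
  split_ifs with h h' h' <;> simp_all [Fin.lt_def]

lemma sum_two {n : ℕ} (F : Fin n → ℤ) (j₁ j₂ : Fin n) (hne : j₁ ≠ j₂)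
    (h0 : ∀ j, j ≠ j₁ → j ≠ j₂ → F j = 0) : ∑ j, F j = F j₁ + F j₂ := by
  calc ∑ j, F j = ∑ j ∈ ({j₁, j₂} : Finset (Fin n)), F j := by
        refine (Finset.sum_subset (Finset.subset_univ _) (fun x _ hx => ?_)).symm
        simp only [Finset.mem_insert, Finset.mem_singleton, not_or] at hx
        exact h0 x hx.1 hx.2
    _ = F j₁ + F j₂ := Finset.sum_pair hne

lemma det_corem_congr {f g : ℕ → ℕ → ℤ} {n n' : ℕ} (h : n = n')
    (hfg : ∀ i j, i < n → j < n → f i j = g i j) :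
    (corem f n).det = (corem g n').det := by
  subst h
  congr 1
  ext i j
  exact hfg _ _ i.isLt j.isLt

theorem det_chain (a : ℕ) : ∀ (f : ℕ → ℕ → ℤ) (m u : ℕ), u < m →
    (corem (chEnt f m u) (m + a)).det
      = ((a : ℤ) + 1) * (corem f m).det - (a : ℤ) * (corem (delEnt f u) (m - 1)).det := by
  induction a using Nat.strong_induction_on with
  | _ a ih =>
    match a with
    | 0 =>
      intro f m u hu
      have h1 : (corem (chEnt f m u) (m + 0)).det = (corem f m).det := by
        apply det_corem_congr (by omega)
        intro i j hi hj
        unfold chEnt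
        rw [if_pos ⟨by omega, by omega⟩]
      rw [h1]; push_cast; ring
    | 1 =>
      intro f m u hu
      obtain ⟨k, rfl⟩ : ∃ k, m = k + 1 := ⟨m - 1, by omega⟩
      set M : Matrix (Fin (k + 2)) (Fin (k + 2)) ℤ := corem (chEnt f (k+1) u) (k + 1 + 1) with hM
      have hj1 : u < k + 2 := by omega
      set j₁ : Fin (k + 2) := ⟨u, hj1⟩ with hj₁
      have hzero : ∀ j : Fin (k+2), j ≠ j₁ → j ≠ Fin.last (k+1) →
          (-1 : ℤ) ^ (((Fin.last (k+1) : Fin (k+2)) : ℕ) + (j : ℕ)) * M (Fin.last (k+1)) j *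
            (M.submatrix (Fin.last (k+1)).succAbove j.succAbove).det = 0 := by
        intro j hne1 hne2
        have h1 : j.val ≠ u := fun h => hne1 (Fin.ext h)
        have h2 : j.val ≠ k + 1 := fun h => hne2 (Fin.ext h)
        have h3 : j.val < k + 2 := j.isLt
        have hz : M (Fin.last (k+1)) j = 0 := by
          show chEnt f (k+1) u (k+1) j.val = 0
          unfold chEnt
          split_ifs <;> omega
        rw [hz]; ring
      have hdiag : M (Fin.last (k+1)) (Fin.last (k+1)) = 2 := by
        show chEnt f (k+1) u (k+1) (k+1) = 2
        unfold chEnt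
        split_ifs <;> omega
      have hminor2 : M.submatrix (Fin.last (k+1)).succAbove (Fin.last (k+1)).succAbove
          = corem f (k+1) := by
        ext i j
        show chEnt f (k+1) u ((Fin.last (k+1)).succAbove i).val ((Fin.last (k+1)).succAbove j).val
          = f i.val j.val
        rw [succAbove_val, succAbove_val]
        simp only [Fin.val_last]
        rw [if_pos i.isLt, if_pos j.isLt]
        unfold chEnt
        rw [if_pos ⟨i.isLt, j.isLt⟩]
      have hentry : M (Fin.last (k+1)) j₁ = -1 := by
        show chEnt f (k+1) u (k+1) u = -1
        unfold chEnt
        split_ifs <;> omega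
      set N : Matrix (Fin (k+1)) (Fin (k+1)) ℤ := M.submatrix (Fin.last (k+1)).succAbove j₁.succAbove with hN
      have hNij : ∀ (i j : Fin (k+1)), N i j
          = chEnt f (k+1) u i.val (if j.val < u then j.val else j.val + 1) := by
        intro i j
        show chEnt f (k+1) u ((Fin.last (k+1)).succAbove i).val ((j₁.succAbove j)).val = _
        rw [succAbove_val, succAbove_val]
        simp only [Fin.val_last, hj₁]
        rw [if_pos i.isLt]
      have hdetN : N.det = (-1 : ℤ)^(u + k) * (-1) * (corem (delEnt f u) k).det := by
        rw [Matrix.det_succ_column N (Fin.last k)]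
        have hcol : ∀ i : Fin (k+1), N i (Fin.last k) = chEnt f (k+1) u i.val (k + 1) := by
          intro i
          rw [hNij]
          simp only [Fin.val_last]
          rw [if_neg (by omega : ¬ (k < u))]
        have hi0 : u < k + 1 := by omega
        have hzero2 : ∀ i : Fin (k+1), i ≠ ⟨u, hi0⟩ →
            (-1 : ℤ) ^ ((i : ℕ) + ((Fin.last k : Fin (k+1)) : ℕ)) * N i (Fin.last k) *
              (N.submatrix i.succAbove (Fin.last k).succAbove).det = 0 := by
          intro i hne
          have h1 : i.val ≠ u := fun h => hne (Fin.ext h)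
          have h2 : i.val < k + 1 := i.isLt
          have hz : N i (Fin.last k) = 0 := by
            rw [hcol]
            unfold chEnt
            split_ifs <;> omega
          rw [hz]; ring
        rw [Fintype.sum_eq_single ⟨u, hi0⟩ hzero2]
        have hval : N (⟨u, hi0⟩ : Fin (k+1)) (Fin.last k) = -1 := by
          rw [hcol]
          show chEnt f (k+1) u u (k+1) = -1
          unfold chEnt
          split_ifs <;> omega
        have hminor : N.submatrix (⟨u, hi0⟩ : Fin (k+1)).succAbove (Fin.last k).succAbove
            = corem (delEnt f u) k := by
          ext x y
          show N ((⟨u, hi0⟩ : Fin (k+1)).succAbove x) ((Fin.last k).succAbove y)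
            = delEnt f u x.val y.val
          rw [hNij]
          rw [succAbove_val, succAbove_val]
          simp only [Fin.val_last]
          rw [if_pos y.isLt]
          have hx : x.val < k := x.isLt
          have hy : y.val < k := y.isLt
          unfold chEnt delEnt
          split_ifs <;> first | rfl | omega | (congr 1 <;> omega)
        rw [hval, hminor]
        simp only [Fin.val_last]
      rw [show (corem (chEnt f (k+1) u) (k+1+1)).det = M.det from rfl,
        Matrix.det_succ_row M (Fin.last (k+1))]
      rw [sum_two _ j₁ (Fin.last (k+1)) (Fin.ne_of_val_ne (by simp [hj₁]; omega)) hzero]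
      have hLv : ((Fin.last (k+1) : Fin (k+2)) : ℕ) = k + 1 := rfl
      have hJv : ((j₁ : Fin (k+2)) : ℕ) = u := rfl
      have hk : k + 1 - 1 = k := by omega
      rw [hdiag, hentry, hdetN, hminor2, hLv, hJv, hk]
      have hsign : (-1 : ℤ)^((k+1) + u) * ((-1 : ℤ)^(u+k)) = -1 := by
        rw [← pow_add]
        have he : (k+1) + u + (u + k) = 2 * (u + k) + 1 := by omega
        rw [he, pow_succ, pow_mul]
        norm_num
      have hsign2 : (-1 : ℤ)^((k+1) + (k+1)) = 1 := by
        rw [← two_mul, pow_mul]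
        norm_num
      rw [hsign2]
      push_cast
      linear_combination (corem (delEnt f u) k).det * hsign
    | (a + 2) =>
      intro f m u hu
      set M : Matrix (Fin (m + a + 2)) (Fin (m + a + 2)) ℤ := corem (chEnt f m u) (m + (a + 2)) with hM
      set j₁ : Fin (m + a + 2) := ⟨m + a, by omega⟩ with hj₁
      have hzero : ∀ j : Fin (m+a+2), j ≠ j₁ → j ≠ Fin.last (m+a+1) →
          (-1 : ℤ) ^ (((Fin.last (m+a+1) : Fin (m+a+2)) : ℕ) + (j : ℕ)) * M (Fin.last (m+a+1)) j *
            (M.submatrix (Fin.last (m+a+1)).succAbove j.succAbove).det = 0 := by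
        intro j hne1 hne2
        have h1 : j.val ≠ m + a := fun h => hne1 (Fin.ext h)
        have h2 : j.val ≠ m + a + 1 := fun h => hne2 (Fin.ext h)
        have h3 : j.val < m + a + 2 := j.isLt
        have hz : M (Fin.last (m+a+1)) j = 0 := by
          show chEnt f m u (m+a+1) j.val = 0
          unfold chEnt
          split_ifs <;> omega
        rw [hz]; ring
      have hdiag : M (Fin.last (m+a+1)) (Fin.last (m+a+1)) = 2 := by
        show chEnt f m u (m+a+1) (m+a+1) = 2
        unfold chEnt; split_ifs <;> omega
      have hminor2 : M.submatrix (Fin.last (m+a+1)).succAbove (Fin.last (m+a+1)).succAbove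
          = corem (chEnt f m u) (m + (a+1)) := by
        ext i j
        show chEnt f m u ((Fin.last (m+a+1)).succAbove i).val ((Fin.last (m+a+1)).succAbove j).val
          = chEnt f m u i.val j.val
        rw [succAbove_val, succAbove_val]
        simp only [Fin.val_last]
        rw [if_pos i.isLt, if_pos j.isLt]
      have hentry : M (Fin.last (m+a+1)) j₁ = -1 := by
        show chEnt f m u (m+a+1) (m+a) = -1
        unfold chEnt; split_ifs <;> omega
      set N : Matrix (Fin (m+a+1)) (Fin (m+a+1)) ℤ := M.submatrix (Fin.last (m+a+1)).succAbove j₁.succAbove with hN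
      have hNij : ∀ (i j : Fin (m+a+1)), N i j
          = chEnt f m u i.val (if j.val < m + a then j.val else j.val + 1) := by
        intro i j
        show chEnt f m u ((Fin.last (m+a+1)).succAbove i).val ((j₁.succAbove j)).val = _
        rw [succAbove_val, succAbove_val]
        simp only [Fin.val_last, hj₁]
        rw [if_pos i.isLt]
      have hdetN : N.det = - (corem (chEnt f m u) (m + a)).det := by
        rw [Matrix.det_succ_column N (Fin.last (m+a))]
        have hcol : ∀ i : Fin (m+a+1), N i (Fin.last (m+a)) = chEnt f m u i.val (m+a+1) := by
          intro i
          rw [hNij]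
          simp only [Fin.val_last]
          rw [if_neg (by omega : ¬ (m + a < m + a))]
        have hzero2 : ∀ i : Fin (m+a+1), i ≠ Fin.last (m+a) →
            (-1 : ℤ) ^ ((i : ℕ) + ((Fin.last (m+a) : Fin (m+a+1)) : ℕ)) * N i (Fin.last (m+a)) *
              (N.submatrix i.succAbove (Fin.last (m+a)).succAbove).det = 0 := by
          intro i hne
          have h1 : i.val ≠ m + a := fun h => hne (Fin.ext h)
          have h2 : i.val < m + a + 1 := i.isLt
          have hz : N i (Fin.last (m+a)) = 0 := by
            rw [hcol]
            unfold chEnt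
            split_ifs <;> omega
          rw [hz]; ring
        rw [Fintype.sum_eq_single (Fin.last (m+a)) hzero2]
        have hval : N (Fin.last (m+a)) (Fin.last (m+a)) = -1 := by
          rw [hcol]
          simp only [Fin.val_last]
          unfold chEnt
          split_ifs <;> omega
        have hminor : N.submatrix (Fin.last (m+a)).succAbove (Fin.last (m+a)).succAbove
            = corem (chEnt f m u) (m + a) := by
          ext x y
          show N ((Fin.last (m+a)).succAbove x) ((Fin.last (m+a)).succAbove y)
            = chEnt f m u x.val y.val
          rw [hNij]
          rw [succAbove_val, succAbove_val]
          simp only [Fin.val_last]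
          rw [if_pos x.isLt, if_pos y.isLt, if_pos (show y.val < m + a from y.isLt)]
        rw [hval, hminor]
        have hs : (-1 : ℤ)^(((Fin.last (m+a) : Fin (m+a+1)) : ℕ) + ((Fin.last (m+a) : Fin (m+a+1)) : ℕ)) = 1 := by
          rw [← two_mul, pow_mul]
          norm_num
        rw [hs]; ring
      rw [show (corem (chEnt f m u) (m + (a+2))).det = M.det from rfl,
        Matrix.det_succ_row M (Fin.last (m+a+1))]
      rw [sum_two _ j₁ (Fin.last (m+a+1)) (Fin.ne_of_val_ne (by simp [hj₁])) hzero]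
      have hLv : ((Fin.last (m+a+1) : Fin (m+a+2)) : ℕ) = m + a + 1 := rfl
      have hJv : ((j₁ : Fin (m+a+2)) : ℕ) = m + a := rfl
      have key1 : (M.submatrix (Fin.last (m+a+1)).succAbove (Fin.last (m+a+1)).succAbove).det
          = ((a : ℤ) + 1 + 1) * (corem f m).det - ((a : ℤ) + 1) * (corem (delEnt f u) (m - 1)).det := by
        rw [congrArg Matrix.det hminor2]
        have := ih (a + 1) (by omega) f m u hu
        push_cast at this ⊢
        exact this
      have key2 := ih a (by omega) f m u hu
      rw [hdiag, hentry, hdetN, key1, key2, hLv, hJv]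
      have hsign : (-1 : ℤ)^((m+a+1) + (m+a)) = -1 := by
        have he : (m+a+1) + (m+a) = 2 * (m + a) + 1 := by omega
        rw [he, pow_succ, pow_mul]; norm_num
      have hsign2 : (-1 : ℤ)^((m+a+1) + (m+a+1)) = 1 := by
        rw [← two_mul, pow_mul]; norm_num
      rw [hsign, hsign2]
      push_cast
      ring


set_option maxHeartbeats 1600000 in
lemma delEnt_chEnt (f : ℕ → ℕ → ℤ) (m u v : ℕ) (hu : u < m) (hv : v < m) (huv : u ≠ v) :
    ∀ i j, delEnt (chEnt f m u) v i j
      = chEnt (delEnt f v) (m - 1) (if u < v then u else u - 1) i j := by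
  intro i j
  unfold delEnt chEnt
  split_ifs <;> first | rfl | omega | (congr 1 <;> omega) |
    (beta_reduce; congr 1 <;> split_ifs <;> omega)

theorem det_double (f : ℕ → ℕ → ℤ) (m u v a b : ℕ)
    (hu : u < m) (hv : v < m) (huv : u ≠ v) (hm : 2 ≤ m) :
    (corem (chEnt (chEnt f m u) (m + a) v) ((m + a) + b)).det
      = ((b : ℤ) + 1) * (((a : ℤ) + 1) * (corem f m).det
          - (a : ℤ) * (corem (delEnt f u) (m - 1)).det)
        - (b : ℤ) * (((a : ℤ) + 1) * (corem (delEnt f v) (m - 1)).det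
          - (a : ℤ) * (corem (delEnt (delEnt f v) (if u < v then u else u - 1)) (m - 2)).det) := by
  rw [det_chain b (chEnt f m u) (m + a) v (by omega)]
  rw [det_chain a f m u hu]
  have h2 : (corem (delEnt (chEnt f m u) v) (m + a - 1)).det
      = (corem (chEnt (delEnt f v) (m - 1) (if u < v then u else u - 1)) ((m - 1) + a)).det :=
    det_corem_congr (by omega) (fun i j _ _ => delEnt_chEnt f m u v hu hv huv i j)
  rw [h2, det_chain a (delEnt f v) (m - 1) (if u < v then u else u - 1)
    (by split_ifs <;> omega)]
  have h3 : m - 1 - 1 = m - 2 := by omega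
  rw [h3]
  all_goals ring

def coreAf (p : ℤ) : ℕ → ℕ → ℤ := fun i j => if i = j then 1 - 2 * p else p
def coreBf (p : ℤ) : ℕ → ℕ → ℤ := fun i j =>
  if i = 0 ∧ j = 0 then -2 * p else if i = j then 1 - 2 * p else p
def coreCf (p : ℤ) : ℕ → ℕ → ℤ := fun i j => if i = j then 1 - 2 * p else p

set_option maxHeartbeats 1600000 in
lemma Aent_match (p : ℤ) (q : ℕ) (hq : 1 ≤ q) :
    ∀ i j, i < 2 * q + 1 → j < 2 * q + 1 →
      Aent p q i j = chEnt (chEnt (coreAf p) 3 1) (3 + (q - 1)) 2 i j := by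
  intro i j hi hj
  unfold Aent chEnt coreAf
  split_ifs <;> omega

set_option maxHeartbeats 1600000 in
lemma Bent_match (p : ℤ) (a b : ℕ) :
    ∀ i j, i < 3 + a + b → j < 3 + a + b →
      Bent p a b i j = chEnt (chEnt (coreBf p) 3 2) (3 + a) 1 i j := by
  intro i j hi hj
  unfold Bent chEnt coreBf
  split_ifs <;> omega

set_option maxHeartbeats 1600000 in
lemma Cent_match (p : ℤ) (a b : ℕ) :
    ∀ i j, i < 2 + a + b → j < 2 + a + b →
      Cent p a b i j = chEnt (chEnt (coreCf p) 2 1) (2 + a) 0 i j := by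
  intro i j hi hj
  unfold Cent chEnt coreCf
  split_ifs <;> omega

lemma detA_val (p : ℤ) (q : ℕ) (hq : 1 ≤ q) :
    (Amat p q).det = 2*p*(3*(q:ℤ)*p - 1) + ((q:ℤ)*p - 1)*(3*(q:ℤ)*p - 1) := by
  have h0 : (Amat p q).det = (corem (Aent p q) (2 * q + 1)).det := rfl
  rw [h0, det_corem_congr (show 2 * q + 1 = (3 + (q-1)) + (q-1) by omega) (Aent_match p q hq)]
  rw [det_double (coreAf p) 3 1 2 (q-1) (q-1) (by omega) (by omega) (by omega) (by omega)]
  rw [show (if (1:ℕ) < 2 then 1 else 1 - 1) = 1 from rfl,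
      show (3:ℕ) - 1 = 2 from rfl, show (3:ℕ) - 2 = 1 from rfl]
  have hd : (corem (coreAf p) 3).det = (1-3*p)^2 := by
    rw [Matrix.det_fin_three]; simp only [corem, coreAf]; norm_num; ring
  have hdu : (corem (delEnt (coreAf p) 1) 2).det = (1-3*p)*(1-p) := by
    rw [Matrix.det_fin_two]; simp only [corem, delEnt, coreAf]; norm_num; ring
  have hdv : (corem (delEnt (coreAf p) 2) 2).det = (1-3*p)*(1-p) := by
    rw [Matrix.det_fin_two]; simp only [corem, delEnt, coreAf]; norm_num; ring
  have hduv : (corem (delEnt (delEnt (coreAf p) 2) 1) 1).det = 1 - 2*p := by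
    rw [Matrix.det_fin_one]; simp only [corem, delEnt, coreAf]; norm_num
  rw [hd, hdu, hdv, hduv]
  have hqc : ((q - 1 : ℕ) : ℤ) = (q : ℤ) - 1 := by omega
  rw [hqc]
  ring

lemma detB_val (p : ℤ) (q : ℕ) (hq : 1 ≤ q) :
    bdet p (q-1) (q-1) = 2*p*(3*(q:ℤ)*p - 1) := by
  have h0 : bdet p (q-1) (q-1) = (corem (Bent p (q-1) (q-1)) (3 + (q-1) + (q-1))).det := rfl
  rw [h0, det_corem_congr rfl (Bent_match p (q-1) (q-1))]
  rw [det_double (coreBf p) 3 2 1 (q-1) (q-1) (by omega) (by omega) (by omega) (by omega)]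
  rw [show (if (2:ℕ) < 1 then 2 else 2 - 1) = 1 from rfl,
      show (3:ℕ) - 1 = 2 from rfl, show (3:ℕ) - 2 = 1 from rfl]
  have hd : (corem (coreBf p) 3).det = -2*p*(1-3*p) := by
    rw [Matrix.det_fin_three]; simp only [corem, coreBf]; norm_num; ring
  have hdu : (corem (delEnt (coreBf p) 2) 2).det = -2*p*(1-2*p) - p^2 := by
    rw [Matrix.det_fin_two]; simp only [corem, delEnt, coreBf]; norm_num; ring
  have hdv : (corem (delEnt (coreBf p) 1) 2).det = -2*p*(1-2*p) - p^2 := by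
    rw [Matrix.det_fin_two]; simp only [corem, delEnt, coreBf]; norm_num; ring
  have hduv : (corem (delEnt (delEnt (coreBf p) 1) 1) 1).det = -2*p := by
    rw [Matrix.det_fin_one]; simp only [corem, delEnt, coreBf]; norm_num
  rw [hd, hdu, hdv, hduv]
  have hqc : ((q - 1 : ℕ) : ℤ) = (q : ℤ) - 1 := by omega
  rw [hqc]
  ring

lemma detC_val (p : ℤ) (q : ℕ) (hq : 1 ≤ q) :
    cdet p (q-1) (q-1) = ((q:ℤ)*p - 1)*(3*(q:ℤ)*p - 1) := by
  have h0 : cdet p (q-1) (q-1) = (corem (Cent p (q-1) (q-1)) (2 + (q-1) + (q-1))).det := rfl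
  rw [h0, det_corem_congr rfl (Cent_match p (q-1) (q-1))]
  rw [det_double (coreCf p) 2 1 0 (q-1) (q-1) (by omega) (by omega) (by omega) (by omega)]
  rw [show (if (1:ℕ) < 0 then 1 else 1 - 1) = 0 from rfl,
      show (2:ℕ) - 1 = 1 from rfl, show (2:ℕ) - 2 = 0 from rfl]
  have hd : (corem (coreCf p) 2).det = (1-3*p)*(1-p) := by
    rw [Matrix.det_fin_two]; simp only [corem, coreCf]; norm_num; ring
  have hdu : (corem (delEnt (coreCf p) 1) 1).det = 1 - 2*p := by
    rw [Matrix.det_fin_one]; simp only [corem, delEnt, coreCf]; norm_num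
  have hdv : (corem (delEnt (coreCf p) 0) 1).det = 1 - 2*p := by
    rw [Matrix.det_fin_one]; simp only [corem, delEnt, coreCf]; norm_num
  have hduv : (corem (delEnt (delEnt (coreCf p) 0) 0) 0).det = 1 := Matrix.det_fin_zero
  rw [hd, hdu, hdv, hduv]
  have hqc : ((q - 1 : ℕ) : ℤ) = (q : ℤ) - 1 := by omega
  rw [hqc]
  ring

theorem detA_pos_and_abs_add (p : ℤ) (hp : 2 ≤ p) (q : ℕ) (hq : 1 ≤ q) :
    0 < (Amat p q).det ∧
    |(Amat p q).det| = |bdet p (q - 1) (q - 1)| + |cdet p (q - 1) (q - 1)| := by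
  have hQ : (1 : ℤ) ≤ (q : ℤ) := by exact_mod_cast hq
  have h1 : (0:ℤ) < 3*(q:ℤ)*p - 1 := by nlinarith
  have h2 : (0:ℤ) < (q:ℤ)*p - 1 := by nlinarith
  have hB := detB_val p q hq
  have hC := detC_val p q hq
  have hA := detA_val p q hq
  have hp0 : (0:ℤ) < p := by nlinarith
  have hBpos : 0 < bdet p (q-1) (q-1) := by
    rw [hB]; exact mul_pos (by nlinarith) h1
  have hCpos : 0 < cdet p (q-1) (q-1) := by
    rw [hC]; exact mul_pos h2 h1
  have hApos : 0 < (Amat p q).det := by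
    rw [hA]; exact add_pos (mul_pos (by nlinarith) h1) (mul_pos h2 h1)
  refine ⟨hApos, ?_⟩
  rw [abs_of_pos hApos, abs_of_pos hBpos, abs_of_pos hCpos]
  linarith [hA, hB, hC]
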